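/- Let H be an optimal Hermite Normal Form row basis of a full-rank integer lattice L ⊆ ℤ^N with D = det(L) ≥ 1, and let m be an even natural number with m ≥ 2·N^{3/2}·D^{1/N}. Then there exists a spin configuration s ∈ ({−1, 1}^m)^N such that the coefficient vector x ∈ ℤ^N defined by x_j = (1/2)·Σ_{p=1}^{m} s_{p,j} (the shifted Hamming weight of the j-th column) is nonzero and satisfies ‖x·H‖ = λ₁(L); i.e., N Hamming-weight-encoded qudits of m qubits each, a system of N·m qubits, suffice to represent a shortest vector of L. -/

import Mathlib

open Matrix Real Finset

/-- The Euclidean norm of a vector in `ℝ^N`. -/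
noncomputable def euclNorm {N : ℕ} (v : Fin N → ℝ) : ℝ := Real.sqrt (∑ i, v i ^ 2)

/-- `λ₁(L)` for the integer lattice `L = {x·H : x ∈ ℤ^N}` generated by the rows of
the integer matrix `H`: the minimum Euclidean norm of a nonzero lattice vector. -/
noncomputable def lambda1Int {N : ℕ} (H : Matrix (Fin N) (Fin N) ℤ) : ℝ :=
  sInf {r : ℝ | ∃ x : Fin N → ℤ, x ≠ 0 ∧ r = euclNorm (fun j => ((x ᵥ* H) j : ℝ))}

/-!
Let `w = x·H` be a shortest nonzero lattice vector, so `|w_j| ≤ λ₁` for every `j`.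
A pigeonhole argument over the `(t+1)^N > D` vectors with entries in `[0, t]`,
`t = ⌊D^{1/N}⌋`, yields a nonzero lattice vector with entries bounded by `t`, hence
`λ₁ ≤ √N·D^{1/N}` (Minkowski's bound). For an optimal HNF basis, `w_j = x_j` off the
last coordinate, while `D·x_N = w_N - ∑_{i<N} w_i b_i` with `0 ≤ b_i < D`; so every
`|x_j| ≤ N·λ₁ ≤ N^{3/2}·D^{1/N} ≤ m/2`, and an integer of absolute value at most `m/2`
is half the sum of `m` spins.
-/

theorem exists_pm_one_sum_eq {m : ℕ} (hm : Even m) {x : ℤ} (hx : 2 * |x| ≤ m) :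
    ∃ s : Fin m → ℤ, (∀ p, s p = 1 ∨ s p = -1) ∧ 2 * x = ∑ p, s p := by
  obtain ⟨k, rfl⟩ := hm
  have hxk := abs_le.mp (show |x| ≤ k by omega)
  obtain ⟨c, hc⟩ : ∃ c : ℕ, (c : ℤ) = k + x := ⟨(k + x).toNat, by omega⟩
  refine ⟨fun p => if (p : ℕ) < c then 1 else -1,
    fun p => by by_cases h : (p : ℕ) < c <;> simp [h], ?_⟩
  rw [Fin.sum_univ_eq_sum_range (fun p => if p < c then (1 : ℤ) else -1),
    ← sum_range_add_sum_Ico _ (show c ≤ k + k by omega),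
    sum_congr rfl fun p hp => if_pos (mem_range.mp hp),
    sum_congr rfl fun p hp => if_neg (not_lt.mpr (mem_Ico.mp hp).1)]
  simp only [sum_const, card_range, Nat.card_Ico, nsmul_eq_mul, mul_one, mul_neg]
  push_cast [show c ≤ k + k by omega]
  omega

theorem exists_ne_zero_abs_le_dvd_sum_mul {ι : Type*} [Fintype ι] [DecidableEq ι] {D : ℤ}
    (hD : 0 < D) {t : ℕ} (hDt : D < ((t + 1) ^ Fintype.card ι : ℕ)) (c : ι → ℤ) :
    ∃ v : ι → ℤ, v ≠ 0 ∧ (∀ i, |v i| ≤ t) ∧ D ∣ ∑ i, v i * c i := by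
  have hcard : (Ico 0 D).card < (univ : Finset (ι → Fin (t + 1))).card := by
    rw [Int.card_Ico, card_univ, Fintype.card_fun, Fintype.card_fin]
    omega
  obtain ⟨a, -, a', -, hne, heq⟩ := exists_ne_map_eq_of_card_lt_of_maps_to hcard
    (f := fun a => (∑ i, (a i : ℤ) * c i) % D)
    fun a _ => by simp [Int.emod_nonneg _ hD.ne', Int.emod_lt_of_pos _ hD]
  refine ⟨fun i => a i - a' i, fun h => hne (funext fun i => Fin.ext ?_), fun i => ?_, ?_⟩
  · have := congrFun h i
    simp only [Pi.zero_apply, sub_eq_zero] at this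
    exact_mod_cast this
  · have := (a i).isLt
    have := (a' i).isLt
    rw [abs_le]
    dsimp only
    constructor <;> omega
  · simpa only [sub_mul, sum_sub_distrib] using Int.ModEq.dvd heq.symm

theorem lt_floor_rpow_inv_add_one_pow {a : ℝ} (ha : 0 ≤ a) {N : ℕ} (hN : N ≠ 0) :
    a < ((⌊a ^ ((1 : ℝ) / N)⌋₊ + 1) ^ N : ℕ) := by
  push_cast
  calc a = (a ^ ((1 : ℝ) / N)) ^ N := by rw [one_div, rpow_inv_natCast_pow ha hN]
    _ < _ := pow_lt_pow_left₀ (Nat.lt_floor_add_one _) (by positivity) hN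

theorem abs_le_euclNorm {N : ℕ} (v : Fin N → ℝ) (j : Fin N) : |v j| ≤ euclNorm v := by
  rw [euclNorm, ← sqrt_sq_eq_abs]
  exact sqrt_le_sqrt (single_le_sum (f := fun i => v i ^ 2) (fun i _ => sq_nonneg _) (mem_univ j))

theorem euclNorm_le_sqrt_mul {N : ℕ} {v : Fin N → ℝ} {t : ℝ} (ht : 0 ≤ t)
    (hv : ∀ i, |v i| ≤ t) : euclNorm v ≤ √N * t := by
  rw [euclNorm, ← sqrt_sq ht, ← sqrt_mul (Nat.cast_nonneg _)]
  refine sqrt_le_sqrt ?_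
  calc ∑ i, v i ^ 2 ≤ ∑ _i : Fin N, t ^ 2 :=
        sum_le_sum fun i _ => sq_le_sq.mpr ((hv i).trans (le_abs_self t))
    _ = N * t ^ 2 := by simp

theorem lambda1Int_le_euclNorm {N : ℕ} (H : Matrix (Fin N) (Fin N) ℤ) {x : Fin N → ℤ}
    (hx : x ≠ 0) : lambda1Int H ≤ euclNorm (fun j => ((x ᵥ* H) j : ℝ)) :=
  csInf_le ⟨0, by rintro r ⟨y, -, rfl⟩; exact sqrt_nonneg _⟩ ⟨x, hx, rfl⟩

theorem exists_euclNorm_eq_lambda1Int {N : ℕ} (hN : 0 < N) (H : Matrix (Fin N) (Fin N) ℤ) :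
    ∃ x : Fin N → ℤ, x ≠ 0 ∧ euclNorm (fun j => ((x ᵥ* H) j : ℝ)) = lambda1Int H := by
  -- minimize the squared norm, which takes values in the well-ordered `ℕ`
  let q : (Fin N → ℤ) → ℕ := fun x => ∑ j, ((x ᵥ* H) j).natAbs ^ 2
  have hq : ∀ x, euclNorm (fun j => ((x ᵥ* H) j : ℝ)) = √(q x) := by
    intro x
    simp [q, euclNorm, Nat.cast_natAbs]
  have hne : {x : Fin N → ℤ | x ≠ 0}.Nonempty :=
    ⟨fun _ => 1, fun h => one_ne_zero (congrFun h ⟨0, hN⟩)⟩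
  set x := Function.argminOn q _ hne
  have hx0 : x ≠ 0 := Function.argminOn_mem q _ hne
  refine ⟨x, hx0, le_antisymm ?_ (lambda1Int_le_euclNorm H hx0)⟩
  refine le_csInf ⟨_, x, hx0, rfl⟩ ?_
  rintro r ⟨y, hy0, rfl⟩
  rw [hq, hq]
  exact sqrt_le_sqrt (by exact_mod_cast not_lt.mp (Function.not_lt_argminOn q _ hy0))

structure Matrix.IsOptimalHNF {ι : Type*} (H : Matrix ι ι ℤ) (l : ι) (D : ℤ) : Prop where
  diag_eq_one : ∀ i, i ≠ l → H i i = 1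
  diag_last : H l l = D
  eq_zero_of_ne : ∀ i j, i ≠ j → j ≠ l → H i j = 0
  last_col_nonneg : ∀ i, i ≠ l → 0 ≤ H i l
  last_col_lt : ∀ i, i ≠ l → H i l < D

namespace Matrix.IsOptimalHNF

variable {ι : Type*} [Fintype ι] {H : Matrix ι ι ℤ} {l : ι} {D : ℤ}

theorem vecMul_apply_of_ne (hH : H.IsOptimalHNF l D) (x : ι → ℤ) {j : ι} (hj : j ≠ l) :
    (x ᵥ* H) j = x j := by
  rw [vecMul, dotProduct, sum_eq_single j
    (fun i _ hij => by rw [hH.eq_zero_of_ne i j hij hj, mul_zero]) (by simp),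
    hH.diag_eq_one j hj, mul_one]

variable [DecidableEq ι]

theorem vecMul_apply_last (hH : H.IsOptimalHNF l D) (x : ι → ℤ) :
    (x ᵥ* H) l = x l * D + ∑ i ∈ univ.erase l, (x ᵥ* H) i * H i l := by
  rw [vecMul, dotProduct, ← add_sum_erase _ _ (mem_univ l), hH.diag_last]
  exact congrArg _ (sum_congr rfl fun i hi => by rw [hH.vecMul_apply_of_ne x (ne_of_mem_erase hi)])

theorem exists_vecMul_eq (hH : H.IsOptimalHNF l D) {v : ι → ℤ}
    (hv : D ∣ v l - ∑ i ∈ univ.erase l, v i * H i l) : ∃ y : ι → ℤ, y ᵥ* H = v := by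
  obtain ⟨q, hq⟩ := hv
  refine ⟨Function.update v l q, funext fun j => ?_⟩
  by_cases hj : j = l
  · subst hj
    rw [hH.vecMul_apply_last, Function.update_self, sum_congr rfl fun i hi => by
      rw [hH.vecMul_apply_of_ne _ (ne_of_mem_erase hi), Function.update_of_ne (ne_of_mem_erase hi)]]
    linarith
  · rw [hH.vecMul_apply_of_ne _ hj, Function.update_of_ne hj]

theorem abs_le_card_mul (hH : H.IsOptimalHNF l D) (hD : 0 < D) {x : ι → ℤ} {r : ℝ}
    (hr : ∀ j, |((x ᵥ* H) j : ℝ)| ≤ r) (j : ι) :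
    |(x j : ℝ)| ≤ Fintype.card ι * r := by
  have hr0 : 0 ≤ r := (abs_nonneg _).trans (hr j)
  have hcard : (1 : ℝ) ≤ Fintype.card ι := by exact_mod_cast Fintype.card_pos_iff.mpr ⟨j⟩
  by_cases hj : j ≠ l
  · rw [← hH.vecMul_apply_of_ne x hj]
    exact (hr j).trans (le_mul_of_one_le_left hr0 hcard)
  rw [not_not.mp hj]
  have hD' : (1 : ℝ) ≤ D := by exact_mod_cast hD
  have hD0 : (0 : ℝ) < D := by exact_mod_cast hD
  have hterm : ∀ i ∈ univ.erase l, |((x ᵥ* H) i : ℝ) * H i l| ≤ r * D := fun i hi => by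
    have hne := ne_of_mem_erase hi
    rw [abs_mul, abs_of_nonneg (by exact_mod_cast hH.last_col_nonneg i hne : (0 : ℝ) ≤ H i l)]
    exact mul_le_mul (hr i) (by exact_mod_cast (hH.last_col_lt i hne).le)
      (by exact_mod_cast hH.last_col_nonneg i hne) hr0
  have hsplit : (Fintype.card ι : ℝ) = (univ.erase l).card + 1 := by
    exact_mod_cast (card_erase_add_one (mem_univ l)).symm
  have hlast :
      (x l : ℝ) * D = (x ᵥ* H) l - ∑ i ∈ univ.erase l, ((x ᵥ* H) i : ℝ) * H i l := by
    rw [hH.vecMul_apply_last]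
    push_cast
    ring
  refine le_of_mul_le_mul_right ?_ hD0
  calc |(x l : ℝ)| * D = |(x l : ℝ) * D| := by rw [abs_mul, abs_of_pos hD0]
    _ ≤ |((x ᵥ* H) l : ℝ)| + |∑ i ∈ univ.erase l, ((x ᵥ* H) i : ℝ) * H i l| := by
      rw [hlast]; exact abs_sub _ _
    _ ≤ r * D + (univ.erase l).card * (r * D) := by
      gcongr
      · exact (hr l).trans (le_mul_of_one_le_right hr0 hD')
      · exact (abs_sum_le_sum_abs _ _).trans
          ((sum_le_sum hterm).trans_eq (by rw [sum_const, nsmul_eq_mul]))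
    _ = Fintype.card ι * r * D := by rw [hsplit]; ring

theorem lambda1Int_le {N : ℕ} {H : Matrix (Fin N) (Fin N) ℤ} {l : Fin N}
    (hH : H.IsOptimalHNF l D) (hN : 0 < N) (hD : 0 < D) :
    lambda1Int H ≤ √N * (D : ℝ) ^ ((1 : ℝ) / N) := by
  set t := ⌊(D : ℝ) ^ ((1 : ℝ) / N)⌋₊
  have hDt : D < ((t + 1) ^ Fintype.card (Fin N) : ℕ) := by
    rw [Fintype.card_fin]
    exact_mod_cast lt_floor_rpow_inv_add_one_pow (by exact_mod_cast hD.le : (0 : ℝ) ≤ D) hN.ne'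
  let c : Fin N → ℤ := fun i => if i = l then 1 else -H i l
  obtain ⟨v, hv0, hvt, hvD⟩ := exists_ne_zero_abs_le_dvd_sum_mul hD hDt c
  have hsum : ∑ i, v i * c i = v l - ∑ i ∈ univ.erase l, v i * H i l := by
    rw [← add_sum_erase _ _ (mem_univ l), sub_eq_add_neg, ← sum_neg_distrib]
    congr 1
    · simp [c]
    · exact sum_congr rfl fun i hi => by simp [c, ne_of_mem_erase hi]
  obtain ⟨y, hy⟩ := hH.exists_vecMul_eq (hsum ▸ hvD)
  have hy0 : y ≠ 0 := by
    rintro rfl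
    exact hv0 (by rw [← hy, zero_vecMul])
  calc lambda1Int H ≤ euclNorm (fun j => ((y ᵥ* H) j : ℝ)) := lambda1Int_le_euclNorm H hy0
    _ ≤ √N * t := euclNorm_le_sqrt_mul (Nat.cast_nonneg _) fun i => by
      rw [hy, ← Int.cast_abs]; exact_mod_cast hvt i
    _ ≤ √N * (D : ℝ) ^ ((1 : ℝ) / N) := by gcongr; exact Nat.floor_le (by positivity)

end Matrix.IsOptimalHNF

theorem hnf_shortest_vector_hamming_qubits_general (N : ℕ) (hN : 0 < N) (D : ℤ) (hD : 1 ≤ D)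
    (H : Matrix (Fin N) (Fin N) ℤ)
    (lastIdx : Fin N)
    (hdiag : ∀ i : Fin N, i ≠ lastIdx → H i i = 1)
    (hDD : H lastIdx lastIdx = D)
    (hoff : ∀ i j : Fin N, i ≠ j → j ≠ lastIdx → H i j = 0)
    (hcol : ∀ i : Fin N, i ≠ lastIdx → 0 ≤ H i lastIdx ∧ H i lastIdx < D)
    (m : ℕ) (hm : Even m)
    (hmsize : 2 * (N : ℝ) ^ ((3 : ℝ) / 2) * (D : ℝ) ^ ((1 : ℝ) / N) ≤ (m : ℝ)) :
    ∃ (s : Fin N → Fin m → ℤ) (x : Fin N → ℤ),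
      (∀ j p, s j p = 1 ∨ s j p = -1) ∧
      (∀ j, 2 * x j = ∑ p, s j p) ∧
      x ≠ 0 ∧
      euclNorm (fun j => ((x ᵥ* H) j : ℝ)) = lambda1Int H := by
  have hH : H.IsOptimalHNF lastIdx D :=
    ⟨hdiag, hDD, hoff, fun i hi => (hcol i hi).1, fun i hi => (hcol i hi).2⟩
  have hD0 : 0 < D := by omega
  obtain ⟨x, hx0, hx⟩ := exists_euclNorm_eq_lambda1Int hN H
  have hlam := hH.lambda1Int_le hN hD0
  have hN32 : (N : ℝ) ^ ((3 : ℝ) / 2) = N * √N := by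
    rw [show (3 : ℝ) / 2 = 1 + 1 / 2 by norm_num, rpow_add (by exact_mod_cast hN), rpow_one,
      sqrt_eq_rpow]
  have hcoef : ∀ j, 2 * |x j| ≤ (m : ℤ) := fun j => by
    have hxj := hH.abs_le_card_mul hD0 (fun i => hx ▸ abs_le_euclNorm _ i) j
    rw [Fintype.card_fin] at hxj
    have : 2 * |(x j : ℝ)| ≤ m := by
      calc 2 * |(x j : ℝ)| ≤ 2 * (N * lambda1Int H) := by gcongr
        _ ≤ 2 * (N * (√N * (D : ℝ) ^ ((1 : ℝ) / N))) := by gcongr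
        _ ≤ m := by rw [hN32] at hmsize; linarith
    exact_mod_cast this
  choose s hs hsum using fun j => exists_pm_one_sum_eq hm (hcoef j)
  exact ⟨s, x, hs, hsum, hx0, hx⟩

/-- for an optimal HNF row basis `H` of a full-rank integer lattice with
determinant `D ≥ 1`, and any even `m` with `m ≥ 2·N^{3/2}·D^{1/N}`, there is a spin
configuration `s ∈ ({-1,1}^m)^N` whose Hamming-weight-encoded coefficient vector
`x j = (1/2)·∑_p s j p` is nonzero and represents a shortest vector of the lattice;
i.e. `N` Hamming qudits of `m` qubits each (a system of `N·m` qubits) suffice. -/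
theorem hnf_shortest_vector_hamming_qubits (N : ℕ) (hN : 0 < N) (D : ℤ) (hD : 1 ≤ D)
    (H : Matrix (Fin N) (Fin N) ℤ)
    (lastIdx : Fin N) (hlast : (lastIdx : ℕ) = N - 1)
    (hdet : H.det = D)
    (hdiag : ∀ i : Fin N, i ≠ lastIdx → H i i = 1)
    (hDD : H lastIdx lastIdx = D)
    (hoff : ∀ i j : Fin N, i ≠ j → j ≠ lastIdx → H i j = 0)
    (hcol : ∀ i : Fin N, i ≠ lastIdx → 0 ≤ H i lastIdx ∧ H i lastIdx < D)
    (m : ℕ) (hm : Even m)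
    (hmsize : 2 * (N : ℝ) ^ ((3 : ℝ) / 2) * (D : ℝ) ^ ((1 : ℝ) / N) ≤ (m : ℝ)) :
    ∃ (s : Fin N → Fin m → ℤ) (x : Fin N → ℤ),
      (∀ j p, s j p = 1 ∨ s j p = -1) ∧
      (∀ j, 2 * x j = ∑ p, s j p) ∧
      x ≠ 0 ∧
      euclNorm (fun j => ((x ᵥ* H) j : ℝ)) = lambda1Int H :=
  hnf_shortest_vector_hamming_qubits_general N hN D hD H lastIdx hdiag hDD hoff hcol m hm hmsize
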